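/- There exists a constant C > 0, depending only on n, δ, g, C₀, C₁, γ₀, γ₁, such that for every v = r v̂ with r = |v| ≥ 1: ∫_{{t∈ℝ : |t|≥1}} ‖∇Ṽ^s_{|v|,t}‖_∞ dt ≤ C |v|^{−1}. -/

import Mathlib

open scoped InnerProductSpace
open MeasureTheory Real Filter

noncomputable section

/-- sup-norm of the gradient of `W` : `‖∇W‖_∞ = sup_x |∇W(x)|`. -/
noncomputable def gradSup {n : ℕ} (W : EuclideanSpace ℝ (Fin n) → ℝ) : ℝ :=
  ⨆ x, ‖fderiv ℝ W x‖

/-- sup-norm of the Laplacian of `W` : `‖ΔW‖_∞ = sup_x |ΔW(x)|`. -/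
noncomputable def lapSup {n : ℕ} (W : EuclideanSpace ℝ (Fin n) → ℝ) : ℝ :=
  ⨆ x, |∑ j, fderiv ℝ (fun y => fderiv ℝ W y (EuclideanSpace.single j 1)) x
      (EuclideanSpace.single j 1)|

/-- the cut-off translated potential
`Ṽ_{|v|,t}(x) = V(x + v t + e₁ t²/2) · g(x/(λ₁|v|⟨t⟩))`, with `v = r·v̂`. -/
noncomputable def cutV {n : ℕ} (V g : EuclideanSpace ℝ (Fin n) → ℝ)
    (lam : ℝ) (vhat e1 : EuclideanSpace ℝ (Fin n)) (r t : ℝ) :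
    EuclideanSpace ℝ (Fin n) → ℝ :=
  fun x => V (x + (r * t) • vhat + (t ^ 2 / 2) • e1) *
    g ((lam * r * Real.sqrt (1 + t ^ 2))⁻¹ • x)

/-! ### Auxiliary lemmas -/

lemma opnorm_le_sum_aux {n : ℕ} (L : EuclideanSpace ℝ (Fin n) →L[ℝ] ℝ) :
    ‖L‖ ≤ ∑ j, ‖L (EuclideanSpace.single j 1)‖ := by
  refine L.opNorm_le_bound (Finset.sum_nonneg fun _ _ => norm_nonneg _) fun x => ?_
  have hx : x = ∑ j, x j • EuclideanSpace.single j (1:ℝ) := by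
    ext i
    rw [WithLp.ofLp_sum, Finset.sum_apply]
    simp [EuclideanSpace.single_apply]
  calc ‖L x‖ = ‖∑ j, x j • L (EuclideanSpace.single j 1)‖ := by
        conv_lhs => rw [hx]
        rw [map_sum]
        simp
    _ ≤ ∑ j, ‖x j • L (EuclideanSpace.single j 1)‖ := norm_sum_le _ _
    _ ≤ ∑ j, ‖x‖ * ‖L (EuclideanSpace.single j 1)‖ := by
        refine Finset.sum_le_sum fun j _ => ?_
        rw [norm_smul]
        refine mul_le_mul_of_nonneg_right ?_ (norm_nonneg _)
        rw [Real.norm_eq_abs]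
        have h1 : |x j| = Real.sqrt ((x j)^2) := (Real.sqrt_sq_eq_abs _).symm
        rw [h1, EuclideanSpace.norm_eq]
        apply Real.sqrt_le_sqrt
        calc (x j)^2 = ‖x j‖^2 := by rw [Real.norm_eq_abs, sq_abs]
          _ ≤ ∑ i, ‖x i‖^2 :=
            Finset.single_le_sum (fun i _ => sq_nonneg ‖x i‖) (Finset.mem_univ j)
    _ = (∑ j, ‖L (EuclideanSpace.single j 1)‖) * ‖x‖ := by rw [Finset.sum_mul]; simp [mul_comm]

lemma intS_aux (p : ℝ) (hp : p < -1) :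
    IntegrableOn (fun t : ℝ => |t| ^ p) {t : ℝ | 1 ≤ |t|} := by
  have hset : {t : ℝ | 1 ≤ |t|} = Set.Iic (-1 : ℝ) ∪ Set.Ici (1:ℝ) := by
    ext t; simp only [Set.mem_setOf_eq, le_abs, Set.mem_union, Set.mem_Iic, Set.mem_Ici]
    constructor
    · rintro (h | h); · right; exact h
      · left; linarith
    · rintro (h | h); · right; linarith
      · left; exact h
  have h1 : IntegrableOn (fun t : ℝ => t ^ p) (Set.Ioi (1:ℝ)) :=
    integrableOn_Ioi_rpow_of_lt hp one_pos
  have h2 : IntegrableOn (fun t : ℝ => |t| ^ p) (Set.Ici (1:ℝ)) := by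
    rw [integrableOn_Ici_iff_integrableOn_Ioi]
    exact h1.congr_fun (fun x hx => by rw [abs_of_pos (lt_trans one_pos hx)]) measurableSet_Ioi
  have h3 : IntegrableOn (fun t : ℝ => |t| ^ p) (Set.Iic (-1:ℝ)) := by
    rw [← (Measure.measurePreserving_neg (volume : Measure ℝ)).integrableOn_comp_preimage
        (Homeomorph.neg ℝ).measurableEmbedding]
    simp only [Function.comp_def, abs_neg, Set.neg_preimage, Set.neg_Iic, neg_neg]
    exact h2
  rw [hset]
  exact h3.union h2

lemma m_rpow_le_aux (m ε : ℝ) (hm0 : 0 < m) (hm1 : m ≤ 1) (hε1 : ε ≤ 1) :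
    m ^ (-ε) ≤ m⁻¹ := by
  have h1 : (1:ℝ) ≤ m⁻¹ := (one_le_inv_iff₀).mpr ⟨hm0, hm1⟩
  calc m ^ (-ε) = (m⁻¹) ^ ε := by
        rw [Real.rpow_neg hm0.le, ← Real.inv_rpow hm0.le]
    _ ≤ (m⁻¹) ^ (1:ℝ) := Real.rpow_le_rpow_of_exponent_le h1 hε1
    _ = m⁻¹ := Real.rpow_one _

lemma half_rpow_aux (t ε : ℝ) (ht : 1 ≤ |t|) (hε1 : ε ≤ 1) :
    (t^2/2) ^ (-ε) ≤ 2 * |t| ^ (-(2*ε)) := by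
  have ht0 : (0:ℝ) < |t| := lt_of_lt_of_le one_pos ht
  have h2 : (t^2/2 : ℝ) = (|t|^2) * (2:ℝ)⁻¹ := by rw [sq_abs]; ring
  rw [h2, Real.mul_rpow (by positivity) (by positivity)]
  have hA : ((|t|:ℝ)^2) ^ (-ε) = |t| ^ (-(2*ε)) := by
    rw [← Real.rpow_natCast |t| 2, ← Real.rpow_mul (abs_nonneg t)]
    norm_num
  have hB : ((2:ℝ)⁻¹) ^ (-ε) ≤ 2 := by
    rw [Real.rpow_neg (by norm_num), Real.inv_rpow (by norm_num), inv_inv]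
    calc (2:ℝ) ^ ε ≤ (2:ℝ) ^ (1:ℝ) := Real.rpow_le_rpow_of_exponent_le one_le_two hε1
      _ = 2 := Real.rpow_one 2
  rw [hA]
  calc |t| ^ (-(2*ε)) * ((2:ℝ)⁻¹)^(-ε) ≤ |t| ^ (-(2*ε)) * 2 := by
        gcongr
    _ = 2 * |t| ^ (-(2*ε)) := mul_comm _ _

lemma sqrt_ge_self_aux (u : ℝ) (h0 : 0 ≤ u) (h1 : u ≤ 1) : u ≤ Real.sqrt u := by
  nlinarith [Real.sq_sqrt h0, Real.sqrt_nonneg u, Real.sqrt_le_sqrt h1, Real.sqrt_one]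

lemma self_le_sqrt_aux (y : ℝ) (hy : 0 ≤ y) : y ≤ Real.sqrt (1 + y^2) := by
  nlinarith [Real.sq_sqrt (by positivity : (0:ℝ) ≤ 1 + y^2), Real.sqrt_nonneg (1 + y^2)]

lemma sq_le_to_le_aux (b c : ℝ) (hb : 0 ≤ b) (hc : 0 ≤ c) (h : b^2 ≤ c^2) : b ≤ c := by
  nlinarith

/-- lower bounds for the norm of the translation vector. -/
lemma geom_aux {n : ℕ} (vhat e1 : EuclideanSpace ℝ (Fin n)) (hvhat : ‖vhat‖ = 1)
    (he1n : ‖e1‖ = 1) (δ r t : ℝ) (h1δ : 0 < 1 - δ)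
    (hp1 : -δ ≤ ⟪vhat, e1⟫_ℝ) (hp2 : ⟪vhat, e1⟫_ℝ ≤ δ) (hr0 : 0 < r) :
    Real.sqrt (1-δ) * (r*|t|) ≤ ‖(r*t) • vhat + (t^2/2) • e1‖ ∧
      Real.sqrt (1-δ) * (t^2/2) ≤ ‖(r*t) • vhat + (t^2/2) • e1‖ := by
  set a : EuclideanSpace ℝ (Fin n) := (r*t) • vhat + (t^2/2) • e1 with ha_def
  have hip : ⟪(r*t) • vhat, (t^2/2) • e1⟫_ℝ = (r*t)*((t^2/2)*⟪vhat,e1⟫_ℝ) := by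
    rw [real_inner_smul_left, real_inner_smul_right]
  have hnormsq : ‖a‖^2 = (r*t)^2 + (t^2/2)^2 + 2*((r*t)*((t^2/2)*⟪vhat,e1⟫_ℝ)) := by
    rw [ha_def, norm_add_sq_real, hip, norm_smul, norm_smul, hvhat, he1n,
      Real.norm_eq_abs, Real.norm_eq_abs, mul_one, mul_one, sq_abs, sq_abs]
    ring
  have hasq : (1-δ) * ((r*t)^2 + (t^2/2)^2) ≤ ‖a‖^2 := by
    rw [hnormsq]
    nlinarith [mul_nonneg (by linarith : (0:ℝ) ≤ δ + ⟪vhat,e1⟫_ℝ) (sq_nonneg (r*t + t^2/2)),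
      mul_nonneg (by linarith : (0:ℝ) ≤ δ - ⟪vhat,e1⟫_ℝ) (sq_nonneg (r*t - t^2/2))]
  constructor
  · refine sq_le_to_le_aux _ _
      (mul_nonneg (Real.sqrt_nonneg _) (mul_nonneg hr0.le (abs_nonneg t)))
      (norm_nonneg a) ?_
    have hexp : (Real.sqrt (1-δ) * (r*|t|))^2 = (1-δ) * (r*t)^2 := by
      rw [mul_pow, Real.sq_sqrt h1δ.le, mul_pow, sq_abs]; ring
    rw [hexp]
    nlinarith [hasq, mul_nonneg h1δ.le (sq_nonneg (t^2/2))]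
  · refine sq_le_to_le_aux _ _
      (mul_nonneg (Real.sqrt_nonneg _) (by positivity)) (norm_nonneg a) ?_
    have hexp : (Real.sqrt (1-δ) * (t^2/2))^2 = (1-δ) * (t^2/2)^2 := by
      rw [mul_pow, Real.sq_sqrt h1δ.le]
    rw [hexp]
    nlinarith [hasq, mul_nonneg h1δ.le (sq_nonneg (r*t))]

set_option maxHeartbeats 3200000 in
/-- The key pointwise bound on the derivative of the cut-off potential. -/
lemma key_aux {n : ℕ}
    (e1 vhat : EuclideanSpace ℝ (Fin n)) (hvhat : ‖vhat‖ = 1) (he1n : ‖e1‖ = 1)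
    (δ : ℝ) (hδ0 : 0 ≤ δ) (h1δ : 0 < 1 - δ)
    (hp1 : -δ ≤ ⟪vhat, e1⟫_ℝ) (hp2 : ⟪vhat, e1⟫_ℝ ≤ δ)
    (lam : ℝ) (hlam0 : 0 < lam) (hlam2 : lam * Real.sqrt 2 = (1-δ)/16)
    (g : EuclideanSpace ℝ (Fin n) → ℝ) (hg : ContDiff ℝ (⊤ : ℕ∞) g)
    (hg0 : ∀ y, 0 ≤ g y) (hg1 : ∀ y, g y ≤ 1) (hg4 : ∀ y, 4 ≤ ‖y‖ → g y = 0)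
    (M : ℝ) (hM0 : 0 ≤ M) (hMb : ∀ y, ‖fderiv ℝ g y‖ ≤ M)
    (Vs : EuclideanSpace ℝ (Fin n) → ℝ) (hVs : ContDiff ℝ 1 Vs)
    (C0 C1 γ0 γ1 : ℝ) (hC0 : 0 < C0) (hC1 : 0 < C1)
    (hγ0 : 1 / 2 < γ0) (hγ0' : γ0 ≤ 1) (hγ1 : 1 < γ1) (hγ1' : γ1 ≤ 1 + γ0)
    (hVb : ∀ x, |Vs x| ≤ C0 * Real.sqrt (1 + ‖x‖ ^ 2) ^ (-γ0))
    (hVd : ∀ x, ∀ j : Fin n,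
      |fderiv ℝ Vs x (EuclideanSpace.single j 1)| ≤
        C1 * Real.sqrt (1 + ‖x‖ ^ 2) ^ (-γ1))
    (m q : ℝ) (hm_def : m = (3/4) * Real.sqrt (1 - δ))
    (hqA : q ≤ 2*(γ1-1)) (hqB : q ≤ 2*γ0-1)
    (r : ℝ) (hr : 1 ≤ r) (t : ℝ) (ht : 1 ≤ |t|) (x : EuclideanSpace ℝ (Fin n)) :
    ‖fderiv ℝ (cutV Vs g lam vhat e1 r t) x‖ ≤
      (C0 * M * (2*m⁻¹*lam⁻¹) + n * C1 * (2*m⁻¹*m⁻¹) + 1) * r⁻¹ * |t| ^ (-1-q) := by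
  have hr0 : (0:ℝ) < r := lt_of_lt_of_le one_pos hr
  have ht0 : (0:ℝ) < |t| := lt_of_lt_of_le one_pos ht
  have ht2 : (1:ℝ) ≤ t^2 := by
    have h := mul_le_mul ht ht zero_le_one (abs_nonneg t)
    rw [← sq_abs t, sq]; linarith
  have hsd0 : 0 < Real.sqrt (1 - δ) := Real.sqrt_pos.mpr h1δ
  have hm0 : 0 < m := by rw [hm_def]; exact mul_pos (by norm_num) hsd0
  have hsd1 : Real.sqrt (1 - δ) ≤ 1 := by
    have h := Real.sqrt_le_sqrt (show (1 - δ : ℝ) ≤ 1 by linarith)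
    rwa [Real.sqrt_one] at h
  have hm1 : m ≤ 1 := by
    rw [hm_def]
    have := mul_le_mul_of_nonneg_left hsd1 (by norm_num : (0:ℝ) ≤ 3/4)
    linarith
  have hsd : (1 - δ) ≤ Real.sqrt (1 - δ) := sqrt_ge_self_aux _ h1δ.le (by linarith)
  have hminv : (0:ℝ) ≤ m⁻¹ := inv_nonneg.mpr hm0.le
  have hlaminv : (0:ℝ) ≤ lam⁻¹ := inv_nonneg.mpr hlam0.le
  set K : ℝ := C0 * M * (2*m⁻¹*lam⁻¹) + (n:ℝ) * C1 * (2*m⁻¹*m⁻¹) with hK_def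
  have hK0 : 0 ≤ K := by
    have h1 : 0 ≤ C0 * M * (2*m⁻¹*lam⁻¹) :=
      mul_nonneg (mul_nonneg hC0.le hM0)
        (mul_nonneg (mul_nonneg (by norm_num) hminv) hlaminv)
    have h2 : 0 ≤ (n:ℝ) * C1 * (2*m⁻¹*m⁻¹) :=
      mul_nonneg (mul_nonneg (Nat.cast_nonneg n) hC1.le)
        (mul_nonneg (mul_nonneg (by norm_num) hminv) hminv)
    rw [hK_def]; linarith
  set s : ℝ := lam * r * Real.sqrt (1 + t ^ 2) with hs_def
  have hsq0 : (0:ℝ) < Real.sqrt (1 + t^2) := Real.sqrt_pos.mpr (by positivity)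
  have hs0 : 0 < s := by rw [hs_def]; exact mul_pos (mul_pos hlam0 hr0) hsq0
  have hrpt0 : (0:ℝ) ≤ |t| ^ (-1-q) := Real.rpow_nonneg (abs_nonneg t) _
  have hRHS0 : (0:ℝ) ≤ (K + 1) * r⁻¹ * |t| ^ (-1-q) :=
    mul_nonneg (mul_nonneg (by linarith) (inv_nonneg.mpr hr0.le)) hrpt0
  rw [hK_def] at hRHS0
  by_cases hx4 : ‖x‖ ≤ 4*s
  swap
  · -- outside the support of the cut-off: the derivative vanishes
    push_neg at hx4
    have hopen : IsOpen {z : EuclideanSpace ℝ (Fin n) | 4*s < ‖z‖} :=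
      isOpen_lt continuous_const continuous_norm
    have heq : cutV Vs g lam vhat e1 r t =ᶠ[nhds x] (fun _ => (0:ℝ)) := by
      refine Filter.eventually_of_mem (hopen.mem_nhds hx4) (fun z hz => ?_)
      have hz4 : (4:ℝ) ≤ ‖(lam * r * Real.sqrt (1 + t ^ 2))⁻¹ • z‖ := by
        rw [norm_smul, Real.norm_eq_abs, ← hs_def, abs_of_pos (inv_pos.mpr hs0),
          inv_mul_eq_div]
        rw [le_div_iff₀ hs0]
        have h : 4*s < ‖z‖ := hz
        linarith
      show Vs _ * g ((lam * r * Real.sqrt (1 + t ^ 2))⁻¹ • z) = 0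
      rw [hg4 _ hz4, mul_zero]
    rw [heq.fderiv_eq, fderiv_fun_const]
    simpa using hRHS0
  · -- main estimate
    set a : EuclideanSpace ℝ (Fin n) := (r*t) • vhat + (t^2/2) • e1 with ha_def
    set pt : EuclideanSpace ℝ (Fin n) := x + (r * t) • vhat + (t ^ 2 / 2) • e1 with hpt_def
    have hpt_eq : pt = x + a := by rw [hpt_def, ha_def, add_assoc]
    obtain ⟨hna1, hna2⟩ := geom_aux vhat e1 hvhat he1n δ r t h1δ hp1 hp2 hr0
    rw [← ha_def] at hna1 hna2
    -- the cut-off radius is small compared with ‖a‖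
    have hst1 : |t| ≤ Real.sqrt (1 + t^2) := by
      have h := Real.sqrt_le_sqrt (show t^2 ≤ 1+t^2 by linarith)
      rwa [Real.sqrt_sq_eq_abs] at h
    have hst2 : Real.sqrt (1 + t^2) ≤ Real.sqrt 2 * |t| := by
      have h1 : (1+t^2 : ℝ) ≤ 2 * t^2 := by linarith
      calc Real.sqrt (1+t^2) ≤ Real.sqrt (2*t^2) := Real.sqrt_le_sqrt h1
        _ = Real.sqrt 2 * |t| := by rw [Real.sqrt_mul (by norm_num), Real.sqrt_sq_eq_abs]
    have h4s : 4*s ≤ (1/4) * ‖a‖ := by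
      have hc1 : 4*s ≤ (4*lam*r) * (Real.sqrt 2 * |t|) := by
        have h : 4*s = (4*lam*r) * Real.sqrt (1+t^2) := by rw [hs_def]; ring
        rw [h]
        have h40 : (0:ℝ) ≤ 4*lam*r :=
          mul_nonneg (mul_nonneg (by norm_num) hlam0.le) hr0.le
        exact mul_le_mul_of_nonneg_left hst2 h40
      have hc2 : (4*lam*r) * (Real.sqrt 2 * |t|) = ((1-δ)/4) * (r*|t|) := by
        have h : (4*lam*r) * (Real.sqrt 2 * |t|) = 4 * (lam * Real.sqrt 2) * (r * |t|) := by
          ring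
        rw [h, hlam2]; ring
      have hrt0 : (0:ℝ) ≤ r*|t| := mul_nonneg hr0.le (abs_nonneg t)
      have hc3 : ((1-δ)/4) * (r*|t|) ≤ (Real.sqrt (1-δ)/4) * (r*|t|) :=
        mul_le_mul_of_nonneg_right (by linarith) hrt0
      have hc4 : (Real.sqrt (1-δ)/4) * (r*|t|) ≤ (1/4) * ‖a‖ := by linarith
      linarith
    -- lower bound on ‖pt‖
    have hxa : (3/4) * ‖a‖ ≤ ‖pt‖ := by
      have htri : ‖a‖ ≤ ‖x + a‖ + ‖x‖ := by
        have h := norm_add_le (x+a) (-x)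
        simpa [add_assoc, norm_neg, add_comm] using h
      rw [hpt_eq]
      linarith
    have hxa1 : m * (r*|t|) ≤ ‖pt‖ := by rw [hm_def]; linarith
    have hxa2 : m * (t^2/2) ≤ ‖pt‖ := by rw [hm_def]; linarith
    set Y : ℝ := Real.sqrt (1 + ‖pt‖^2) with hY_def
    have hY0 : 0 < Y := by rw [hY_def]; positivity
    have hYpt : ‖pt‖ ≤ Y := by rw [hY_def]; exact self_le_sqrt_aux _ (norm_nonneg pt)
    have hYa : m * (r*|t|) ≤ Y := le_trans hxa1 hYpt
    have hYb : m * (t^2/2) ≤ Y := le_trans hxa2 hYpt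
    have hmr : (0:ℝ) < m * (r*|t|) := mul_pos hm0 (mul_pos hr0 ht0)
    have hmt : (0:ℝ) < m * (t^2/2) := mul_pos hm0 (by linarith)
    -- derivative computation
    set c : ℝ := (lam * r * Real.sqrt (1 + t ^ 2))⁻¹ with hc_def
    have hcs : c = s⁻¹ := by rw [hc_def, hs_def]
    have hc0 : 0 < c := by rw [hcs]; exact inv_pos.mpr hs0
    set DF : EuclideanSpace ℝ (Fin n) →L[ℝ] ℝ := fderiv ℝ Vs pt with hDF_def
    set DG : EuclideanSpace ℝ (Fin n) →L[ℝ] ℝ :=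
      (fderiv ℝ g (c • x)).comp (c • ContinuousLinearMap.id ℝ (EuclideanSpace ℝ (Fin n)))
      with hDG_def
    have h1 : HasFDerivAt (fun y : EuclideanSpace ℝ (Fin n) =>
        y + (r*t) • vhat + (t^2/2) • e1)
        (ContinuousLinearMap.id ℝ (EuclideanSpace ℝ (Fin n))) x :=
      ((hasFDerivAt_id x).add_const _).add_const _
    have hF : HasFDerivAt (fun y : EuclideanSpace ℝ (Fin n) =>
        Vs (y + (r*t) • vhat + (t^2/2) • e1)) DF x := by
      have h := ((hVs.differentiable one_ne_zero pt).hasFDerivAt).comp x h1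
      exact h
    have hmap : HasFDerivAt (fun y : EuclideanSpace ℝ (Fin n) => c • y)
        (c • ContinuousLinearMap.id ℝ (EuclideanSpace ℝ (Fin n))) x :=
      (hasFDerivAt_id x).const_smul c
    have hG : HasFDerivAt (fun y : EuclideanSpace ℝ (Fin n) => g (c • y)) DG x :=
      ((hg.differentiable (by simp) (c • x)).hasFDerivAt).comp x hmap
    have hW : HasFDerivAt (cutV Vs g lam vhat e1 r t)
        ((Vs pt) • DG + (g (c • x)) • DF) x := by
      have h := hF.mul hG
      have hcut : cutV Vs g lam vhat e1 r t = fun y : EuclideanSpace ℝ (Fin n) =>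
          Vs (y + (r*t) • vhat + (t^2/2) • e1) * g (c • y) := by
        funext y; rw [cutV, hc_def]
      rw [hcut, hpt_def]
      exact h
    rw [hW.fderiv]
    -- bounds on the pieces
    have hDFb : ‖DF‖ ≤ (n:ℝ) * (C1 * Y ^ (-γ1)) := by
      refine (opnorm_le_sum_aux DF).trans ?_
      calc ∑ j, ‖DF (EuclideanSpace.single j 1)‖
          ≤ ∑ _j : Fin n, C1 * Y ^ (-γ1) := by
            refine Finset.sum_le_sum fun j _ => ?_
            rw [Real.norm_eq_abs, hDF_def]
            simpa [hY_def] using hVd pt j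
        _ = (n:ℝ) * (C1 * Y ^ (-γ1)) := by
            rw [Finset.sum_const, Finset.card_univ, Fintype.card_fin, nsmul_eq_mul]
    have hDGb : ‖DG‖ ≤ M * c := by
      rw [hDG_def]
      refine (ContinuousLinearMap.opNorm_comp_le _ _).trans ?_
      have hcid : ‖c • ContinuousLinearMap.id ℝ (EuclideanSpace ℝ (Fin n))‖ ≤ c := by
        refine ContinuousLinearMap.opNorm_le_bound _ hc0.le fun y => ?_
        simp [norm_smul, abs_of_pos hc0]
      exact mul_le_mul (hMb _) hcid (norm_nonneg _) hM0
    have hFxb : |Vs pt| ≤ C0 * Y ^ (-γ0) := by simpa [hY_def] using hVb pt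
    have hGxb : |g (c • x)| ≤ 1 := abs_le.mpr ⟨by linarith [hg0 (c • x)], hg1 _⟩
    -- rpow estimates
    have hε1 : γ1 - 1 ≤ 1 := by linarith
    have hB1 : Y ^ (-γ1) ≤ (2*m⁻¹*m⁻¹) * (r⁻¹ * |t| ^ (-1-q)) := by
      have hsplit : Y ^ (-γ1) = Y ^ (-(1:ℝ)) * Y ^ (-(γ1-1)) := by
        rw [← Real.rpow_add hY0]; congr 1; ring
      have t1 : Y ^ (-(1:ℝ)) ≤ (m*(r*|t|)) ^ (-(1:ℝ)) :=
        Real.rpow_le_rpow_of_nonpos hmr hYa (by norm_num)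
      have t2 : Y ^ (-(γ1-1)) ≤ (m*(t^2/2)) ^ (-(γ1-1)) :=
        Real.rpow_le_rpow_of_nonpos hmt hYb (by linarith)
      calc Y ^ (-γ1) = Y ^ (-(1:ℝ)) * Y ^ (-(γ1-1)) := hsplit
        _ ≤ (m*(r*|t|)) ^ (-(1:ℝ)) * ((m*(t^2/2)) ^ (-(γ1-1))) :=
            mul_le_mul t1 t2 (Real.rpow_nonneg hY0.le _) (Real.rpow_nonneg hmr.le _)
        _ = (m⁻¹*(r⁻¹*|t|⁻¹)) * (m ^ (-(γ1-1)) * (t^2/2) ^ (-(γ1-1))) := by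
            rw [Real.rpow_neg_one, Real.mul_rpow hm0.le (by positivity), mul_inv, mul_inv]
        _ ≤ (m⁻¹*(r⁻¹*|t|⁻¹)) * (m⁻¹ * (2 * |t| ^ (-(2*(γ1-1))))) := by
            have hmp := m_rpow_le_aux m (γ1-1) hm0 hm1 hε1
            have hhp := half_rpow_aux t (γ1-1) ht hε1
            have hnn : (0:ℝ) ≤ m⁻¹*(r⁻¹*|t|⁻¹) :=
              mul_nonneg hminv (mul_nonneg (inv_nonneg.mpr hr0.le) (inv_nonneg.mpr ht0.le))
            refine mul_le_mul_of_nonneg_left ?_ hnn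
            exact mul_le_mul hmp hhp (Real.rpow_nonneg (by positivity) _) hminv
        _ = (2*m⁻¹*m⁻¹) * (r⁻¹ * (|t|⁻¹ * |t| ^ (-(2*(γ1-1))))) := by ring
        _ = (2*m⁻¹*m⁻¹) * (r⁻¹ * |t| ^ (-1-2*(γ1-1))) := by
            rw [← Real.rpow_neg_one |t|, ← Real.rpow_add ht0]
            congr 2
        _ ≤ (2*m⁻¹*m⁻¹) * (r⁻¹ * |t| ^ (-1-q)) := by
            have hle : |t| ^ (-1-2*(γ1-1)) ≤ |t| ^ (-1-q) :=
              Real.rpow_le_rpow_of_exponent_le ht (by linarith)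
            have hnn : (0:ℝ) ≤ 2*m⁻¹*m⁻¹ :=
              mul_nonneg (mul_nonneg (by norm_num) hminv) hminv
            have hnn2 : (0:ℝ) ≤ r⁻¹ := inv_nonneg.mpr hr0.le
            exact mul_le_mul_of_nonneg_left (mul_le_mul_of_nonneg_left hle hnn2) hnn
    have hB2 : Y ^ (-γ0) * c ≤ (2*m⁻¹*lam⁻¹) * (r⁻¹ * |t| ^ (-1-q)) := by
      have t3 : Y ^ (-γ0) ≤ (m*(t^2/2)) ^ (-γ0) :=
        Real.rpow_le_rpow_of_nonpos hmt hYb (by linarith)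
      have t4 : c ≤ lam⁻¹ * (r⁻¹ * |t|⁻¹) := by
        rw [hcs]
        have hsl : lam * (r * |t|) ≤ s := by
          rw [hs_def]
          have h : lam * r * |t| ≤ lam * r * Real.sqrt (1+t^2) :=
            mul_le_mul_of_nonneg_left hst1 (mul_nonneg hlam0.le hr0.le)
          linarith [h]
        have h := inv_anti₀ (mul_pos hlam0 (mul_pos hr0 ht0)) hsl
        calc s⁻¹ ≤ (lam * (r * |t|))⁻¹ := h
          _ = lam⁻¹ * (r⁻¹ * |t|⁻¹) := by rw [mul_inv, mul_inv]
      calc Y ^ (-γ0) * c ≤ ((m*(t^2/2)) ^ (-γ0)) * (lam⁻¹ * (r⁻¹ * |t|⁻¹)) :=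
            mul_le_mul t3 t4 hc0.le (Real.rpow_nonneg hmt.le _)
        _ = (m ^ (-γ0) * (t^2/2) ^ (-γ0)) * (lam⁻¹ * (r⁻¹ * |t|⁻¹)) := by
            rw [Real.mul_rpow hm0.le (by positivity)]
        _ ≤ (m⁻¹ * (2 * |t| ^ (-(2*γ0)))) * (lam⁻¹ * (r⁻¹ * |t|⁻¹)) := by
            have hmp := m_rpow_le_aux m γ0 hm0 hm1 hγ0'
            have hhp := half_rpow_aux t γ0 ht hγ0'
            refine mul_le_mul_of_nonneg_right ?_
              (mul_nonneg hlaminv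
                (mul_nonneg (inv_nonneg.mpr hr0.le) (inv_nonneg.mpr ht0.le)))
            exact mul_le_mul hmp hhp (Real.rpow_nonneg (by positivity) _) hminv
        _ = (2*m⁻¹*lam⁻¹) * (r⁻¹ * (|t| ^ (-(2*γ0)) * |t|⁻¹)) := by ring
        _ = (2*m⁻¹*lam⁻¹) * (r⁻¹ * |t| ^ (-1-2*γ0)) := by
            rw [← Real.rpow_neg_one |t|, ← Real.rpow_add ht0]
            congr 2
            ring
        _ ≤ (2*m⁻¹*lam⁻¹) * (r⁻¹ * |t| ^ (-1-q)) := by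
            have hle : |t| ^ (-1-2*γ0) ≤ |t| ^ (-1-q) :=
              Real.rpow_le_rpow_of_exponent_le ht (by linarith)
            have hnn : (0:ℝ) ≤ 2*m⁻¹*lam⁻¹ :=
              mul_nonneg (mul_nonneg (by norm_num) hminv) hlaminv
            have hnn2 : (0:ℝ) ≤ r⁻¹ := inv_nonneg.mpr hr0.le
            exact mul_le_mul_of_nonneg_left (mul_le_mul_of_nonneg_left hle hnn2) hnn
    -- put everything together
    have hT0 : (0:ℝ) ≤ r⁻¹ * |t| ^ (-1-q) :=
      mul_nonneg (inv_nonneg.mpr hr0.le) hrpt0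
    have step1 : ‖(Vs pt) • DG + (g (c • x)) • DF‖ ≤
        |Vs pt| * ‖DG‖ + |g (c • x)| * ‖DF‖ := by
      refine (norm_add_le _ _).trans ?_
      rw [norm_smul (Vs pt) DG, norm_smul (g (c • x)) DF, Real.norm_eq_abs, Real.norm_eq_abs]
    have step2 : |Vs pt| * ‖DG‖ ≤ C0 * M * (Y ^ (-γ0) * c) := by
      have h := mul_le_mul hFxb hDGb (norm_nonneg _)
        (mul_nonneg hC0.le (Real.rpow_nonneg hY0.le _))
      exact h.trans_eq (by ring)
    have step3 : |g (c • x)| * ‖DF‖ ≤ (n:ℝ) * (C1 * Y ^ (-γ1)) := by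
      have h := mul_le_mul hGxb hDFb (norm_nonneg _) zero_le_one
      simpa using h
    have step4 : C0 * M * (Y ^ (-γ0) * c) ≤
        C0 * M * ((2*m⁻¹*lam⁻¹) * (r⁻¹ * |t| ^ (-1-q))) :=
      mul_le_mul_of_nonneg_left hB2 (mul_nonneg hC0.le hM0)
    have step5 : (n:ℝ) * (C1 * Y ^ (-γ1)) ≤
        (n:ℝ) * C1 * ((2*m⁻¹*m⁻¹) * (r⁻¹ * |t| ^ (-1-q))) := by
      have h := mul_le_mul_of_nonneg_left hB1 (mul_nonneg (Nat.cast_nonneg n) hC1.le)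
      exact le_of_eq_of_le (by ring) h
    have hKsum : C0 * M * ((2*m⁻¹*lam⁻¹) * (r⁻¹ * |t| ^ (-1-q)))
        + (n:ℝ) * C1 * ((2*m⁻¹*m⁻¹) * (r⁻¹ * |t| ^ (-1-q)))
        = K * (r⁻¹ * |t| ^ (-1-q)) := by
      rw [hK_def]; ring
    have hfin : K * (r⁻¹ * |t| ^ (-1-q)) ≤ (K + 1) * r⁻¹ * |t| ^ (-1-q) := by
      have h := mul_le_mul_of_nonneg_right
        (le_add_of_nonneg_right zero_le_one : K ≤ K + 1) hT0
      exact h.trans_eq (mul_assoc _ _ _).symm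
    refine le_trans step1 (le_trans (add_le_add (step2.trans step4) (step3.trans step5)) ?_)
    rw [hKsum]
    exact hfin

set_option maxHeartbeats 1600000 in
theorem stmt_4 (n : ℕ) (hn : 2 ≤ n)
    (e1 : EuclideanSpace ℝ (Fin n))
    (he1 : e1 = EuclideanSpace.single ⟨0, by omega⟩ (1 : ℝ))
    (vhat : EuclideanSpace ℝ (Fin n)) (hvhat : ‖vhat‖ = 1)
    (δ : ℝ) (hδ : δ = |⟪vhat, e1⟫_ℝ|) (hδ1 : δ < 1)
    (lam : ℝ) (hlam : lam = (1 - δ) / (16 * Real.sqrt 2))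
    (g : EuclideanSpace ℝ (Fin n) → ℝ) (hg : ContDiff ℝ (⊤ : ℕ∞) g)
    (hg0 : ∀ y, 0 ≤ g y) (hg1 : ∀ y, g y ≤ 1)
    (hg3 : ∀ y, ‖y‖ ≤ 3 → g y = 1) (hg4 : ∀ y, 4 ≤ ‖y‖ → g y = 0)
    (Vs : EuclideanSpace ℝ (Fin n) → ℝ) (hVs : ContDiff ℝ 1 Vs)
    (C0 C1 γ0 γ1 : ℝ) (hC0 : 0 < C0) (hC1 : 0 < C1)
    (hγ0 : 1 / 2 < γ0) (hγ0' : γ0 ≤ 1) (hγ1 : 1 < γ1) (hγ1' : γ1 ≤ 1 + γ0)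
    (hVb : ∀ x, |Vs x| ≤ C0 * Real.sqrt (1 + ‖x‖ ^ 2) ^ (-γ0))
    (hVd : ∀ x, ∀ j : Fin n,
      |fderiv ℝ Vs x (EuclideanSpace.single j 1)| ≤
        C1 * Real.sqrt (1 + ‖x‖ ^ 2) ^ (-γ1)) :
    ∃ C > (0 : ℝ), ∀ r : ℝ, 1 ≤ r →
      ∫ t in {t : ℝ | 1 ≤ |t|}, gradSup (cutV Vs g lam vhat e1 r t) ≤ C * r⁻¹ := by
  classical
  have hδ0 : 0 ≤ δ := hδ ▸ abs_nonneg _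
  have h1δ : (0:ℝ) < 1 - δ := by linarith
  have hlam0 : 0 < lam := by
    rw [hlam]; exact div_pos h1δ (by positivity)
  have he1n : ‖e1‖ = 1 := by rw [he1, EuclideanSpace.norm_single]; norm_num
  have hs2 : (0:ℝ) < Real.sqrt 2 := by positivity
  have hlam2 : lam * Real.sqrt 2 = (1-δ)/16 := by rw [hlam]; field_simp
  have hp1 : -δ ≤ ⟪vhat, e1⟫_ℝ := by rw [hδ]; exact neg_abs_le _
  have hp2 : ⟪vhat, e1⟫_ℝ ≤ δ := by rw [hδ]; exact le_abs_self _
  -- bound on the derivative of g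
  obtain ⟨M, hM0, hMb⟩ : ∃ M : ℝ, 0 ≤ M ∧ ∀ y, ‖fderiv ℝ g y‖ ≤ M := by
    obtain ⟨M0, hM0⟩ := (isCompact_closedBall (0 : EuclideanSpace ℝ (Fin n)) 5)
      |>.exists_bound_of_continuousOn (hg.continuous_fderiv (by simp)).continuousOn
    refine ⟨max M0 0, le_max_right _ _, fun y => ?_⟩
    by_cases hy : ‖y‖ ≤ 5
    · exact (hM0 y (by simpa [Metric.mem_closedBall, dist_zero_right] using hy)).trans
        (le_max_left _ _)
    · have hopen : IsOpen {z : EuclideanSpace ℝ (Fin n) | 4 < ‖z‖} :=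
        isOpen_lt continuous_const continuous_norm
      have hmem : y ∈ {z : EuclideanSpace ℝ (Fin n) | 4 < ‖z‖} := by
        push_neg at hy; simp only [Set.mem_setOf_eq]; linarith
      have heq : g =ᶠ[nhds y] (fun _ => (0:ℝ)) :=
        Filter.eventually_of_mem (hopen.mem_nhds hmem) (fun z hz => hg4 z (le_of_lt hz))
      rw [heq.fderiv_eq, fderiv_fun_const]
      simp [hM0]
  obtain ⟨m, hm_def⟩ : ∃ m : ℝ, m = (3/4) * Real.sqrt (1 - δ) := ⟨_, rfl⟩
  have hsd0 : 0 < Real.sqrt (1 - δ) := Real.sqrt_pos.mpr h1δ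
  have hm0 : 0 < m := by rw [hm_def]; exact mul_pos (by norm_num) hsd0
  have hminv : (0:ℝ) ≤ m⁻¹ := inv_nonneg.mpr hm0.le
  have hlaminv : (0:ℝ) ≤ lam⁻¹ := inv_nonneg.mpr hlam0.le
  obtain ⟨q, hq_def⟩ : ∃ q : ℝ, q = min (2*(γ1-1)) (2*γ0-1) := ⟨_, rfl⟩
  have hq0 : 0 < q := by rw [hq_def]; exact lt_min (by linarith) (by linarith)
  have hqA : q ≤ 2*(γ1-1) := hq_def ▸ min_le_left _ _
  have hqB : q ≤ 2*γ0-1 := hq_def ▸ min_le_right _ _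
  have hInt : IntegrableOn (fun t : ℝ => |t| ^ (-1-q)) {t : ℝ | 1 ≤ |t|} :=
    intS_aux (-1-q) (by linarith)
  have hSm : MeasurableSet {t : ℝ | 1 ≤ |t|} :=
    measurableSet_le measurable_const (continuous_abs.measurable)
  obtain ⟨A, hA_def⟩ : ∃ A : ℝ, A = C0 * M * (2*m⁻¹*lam⁻¹) + n * C1 * (2*m⁻¹*m⁻¹) + 1 :=
    ⟨_, rfl⟩
  have hA0 : 0 < A := by
    have h1 : 0 ≤ C0 * M * (2*m⁻¹*lam⁻¹) :=
      mul_nonneg (mul_nonneg hC0.le hM0)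
        (mul_nonneg (mul_nonneg (by norm_num) hminv) hlaminv)
    have h2 : 0 ≤ (n:ℝ) * C1 * (2*m⁻¹*m⁻¹) :=
      mul_nonneg (mul_nonneg (Nat.cast_nonneg n) hC1.le)
        (mul_nonneg (mul_nonneg (by norm_num) hminv) hminv)
    rw [hA_def]; linarith
  obtain ⟨I, hI_def⟩ : ∃ I : ℝ, I = ∫ t in {t : ℝ | 1 ≤ |t|}, |t| ^ (-1-q) := ⟨_, rfl⟩
  have hI0 : 0 ≤ I := by
    rw [hI_def]
    exact setIntegral_nonneg hSm (fun t _ => by positivity)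
  refine ⟨A * I + 1, by linarith [mul_nonneg hA0.le hI0], fun r hr => ?_⟩
  have hr0 : (0:ℝ) < r := lt_of_lt_of_le one_pos hr
  have key : ∀ t : ℝ, 1 ≤ |t| → ∀ x : EuclideanSpace ℝ (Fin n),
      ‖fderiv ℝ (cutV Vs g lam vhat e1 r t) x‖ ≤ A * r⁻¹ * |t| ^ (-1-q) := by
    intro t ht x
    have h := key_aux e1 vhat hvhat he1n δ hδ0 h1δ hp1 hp2 lam hlam0 hlam2 g hg hg0 hg1 hg4
      M hM0 hMb Vs hVs C0 C1 γ0 γ1 hC0 hC1 hγ0 hγ0' hγ1 hγ1' hVb hVd m q hm_def hqA hqB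
      r hr t ht x
    rw [hA_def]
    exact h
  have key' : ∀ t ∈ {t : ℝ | 1 ≤ |t|},
      gradSup (cutV Vs g lam vhat e1 r t) ≤ A * r⁻¹ * |t| ^ (-1-q) := by
    intro t ht
    exact Real.iSup_le (key t ht)
      (mul_nonneg (mul_nonneg hA0.le (inv_nonneg.mpr hr0.le))
        (Real.rpow_nonneg (abs_nonneg t) _))
  have hgs0 : ∀ t : ℝ, 0 ≤ gradSup (cutV Vs g lam vhat e1 r t) := fun t =>
    Real.iSup_nonneg fun x => norm_nonneg _
  have hInt' : Integrable (fun t : ℝ => A * r⁻¹ * |t| ^ (-1-q))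
      (volume.restrict {t : ℝ | 1 ≤ |t|}) := hInt.const_mul (A * r⁻¹)
  have hstep : (∫ t in {t : ℝ | 1 ≤ |t|}, gradSup (cutV Vs g lam vhat e1 r t)) ≤
      ∫ t in {t : ℝ | 1 ≤ |t|}, A * r⁻¹ * |t| ^ (-1-q) := by
    refine integral_mono_of_nonneg (Filter.Eventually.of_forall hgs0) hInt' ?_
    exact (ae_restrict_iff' hSm).mpr (Filter.Eventually.of_forall key')
  refine hstep.trans ?_
  have h2 : (∫ t in {t : ℝ | 1 ≤ |t|}, A * r⁻¹ * |t| ^ (-1-q)) = A * r⁻¹ * I := by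
    rw [hI_def, MeasureTheory.integral_const_mul]
  rw [h2]
  have h1 : A * r⁻¹ * I = (A * I) * r⁻¹ := by ring
  rw [h1]
  exact mul_le_mul_of_nonneg_right (by linarith) (inv_nonneg.mpr hr0.le)
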